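/- Let a < b be reals, let V be a compact subset of C([a,b]) with the sup-norm, and for each positive integer m let L_m be the piecewise linear interpolation operator at the uniform nodes x_j = a + j(b−a)/m. Set U_m = L_m(V), W_m = V ∪ U_m, and W = ⋃_{i=1}^∞ W_i. Then W is a compact subset of C([a,b]). -/

import Mathlib

/-!
`W` is the image of the compact space `(ℕ ∪ {∞}) × V` under the map sending `(n, v)` to
`L_{n+1} v` and `(∞, v)` to `v`, so it suffices that this map is continuous at the points
`(∞, v)`. Each value `(L_m u)(x)` is a convex combination of two values of `u` at points within
`(b - a)/m` of `x`. Hence every `L_m` is `1`-Lipschitz, and `L_m u → u` uniformly by the uniform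
continuity of `u`; together these give `L_m w → v` as `m → ∞` and `w → v`.
-/

/-- The uniform nodes `x_j = a + j(b−a)/m`, `j = 0, …, m`, of `[a,b]`. -/
noncomputable def node (a b : ℝ) (m j : ℕ) : ℝ := a + j * (b - a) / m

/-- `L` is the piecewise linear interpolation operator on `C([a,b])` at the uniform
nodes `x_j = a + j(b−a)/m`: for `x ∈ [x_j, x_{j+1}]`, `j = 0, …, m−1`,
`(L u)(x) = u(x_j) + ((u(x_{j+1}) − u(x_j))/(x_{j+1} − x_j))(x − x_j)`. -/
def IsLinInterp (a b : ℝ) (hab : a ≤ b) (m : ℕ)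
    (L : C(Set.Icc a b, ℝ) → C(Set.Icc a b, ℝ)) : Prop :=
  ∀ u : C(Set.Icc a b, ℝ), ∀ j : ℕ, j < m →
    ∀ x : Set.Icc a b, node a b m j ≤ (x : ℝ) → (x : ℝ) ≤ node a b m (j + 1) →
      L u x = u (Set.projIcc a b hab (node a b m j)) +
        (u (Set.projIcc a b hab (node a b m (j + 1))) -
            u (Set.projIcc a b hab (node a b m j))) /
          (node a b m (j + 1) - node a b m j) * ((x : ℝ) - node a b m j)

open Filter Topology Set NNReal

theorem Filter.Tendsto.uncurry_of_lipschitzWith {ι X Y : Type*} [PseudoMetricSpace X]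
    [PseudoMetricSpace Y] {l : Filter ι} {T : ι → X → Y} {C : ℝ≥0}
    (hT : ∀ i, LipschitzWith C (T i)) {x : X} {y : Y} (hx : Tendsto (fun i => T i x) l (𝓝 y)) :
    Tendsto (fun p : ι × X => T p.1 p.2) (l ×ˢ 𝓝 x) (𝓝 y) := by
  have hbound : Tendsto (fun p : ι × X => C * dist p.2 x + dist (T p.1 x) y)
      (l ×ˢ 𝓝 x) (𝓝 0) := by
    have hdist : Tendsto (fun z => dist z x) (𝓝 x) (𝓝 0) :=
      (continuous_id.dist continuous_const).tendsto' x 0 (dist_self x)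
    simpa using ((hdist.const_mul (C : ℝ)).comp tendsto_snd).add
      ((tendsto_iff_dist_tendsto_zero.1 hx).comp tendsto_fst)
  refine tendsto_iff_dist_tendsto_zero.2
    (squeeze_zero (fun _ => dist_nonneg) (fun p => ?_) hbound)
  calc dist (T p.1 p.2) y ≤ dist (T p.1 p.2) (T p.1 x) + dist (T p.1 x) y :=
        dist_triangle _ _ _
    _ ≤ C * dist p.2 x + dist (T p.1 x) y := by gcongr; exact (hT p.1).dist_le_mul _ _

theorem IsCompact.union_iUnion_image_of_tendsto {X : Type*} [TopologicalSpace X] {K : Set X}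
    (hK : IsCompact K) {T : ℕ → X → X} (hT : ∀ n, Continuous (T n))
    (hlim : ∀ x ∈ K, Tendsto (fun p : ℕ × X => T p.1 p.2) (atTop ×ˢ 𝓝 x) (𝓝 x)) :
    IsCompact (K ∪ ⋃ n, T n '' K) := by
  set g : OnePoint ℕ × X → X := fun p => p.1.elim p.2 (fun n => T n p.2)
  have hg : ContinuousOn g (univ ×ˢ K) := by
    rintro ⟨y, x⟩ ⟨-, hx⟩
    refine ContinuousAt.continuousWithinAt ?_
    induction y using OnePoint.rec with
    | infty =>
      rw [ContinuousAt, nhds_prod_eq, OnePoint.nhds_infty_eq, sup_prod, tendsto_sup,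
        Filter.coclosedCompact_eq_cocompact, cocompact_eq_cofinite, Nat.cofinite_eq_atTop,
        prod_map_left, pure_prod]
      exact ⟨tendsto_map'_iff.2 (hlim x hx), tendsto_map'_iff.2 tendsto_id⟩
    | coe n =>
      rw [ContinuousAt, nhds_prod_eq, OnePoint.nhds_coe_eq, nhds_discrete, Filter.map_pure,
        pure_prod]
      exact tendsto_map'_iff.2 ((hT n).tendsto x)
  convert (isCompact_univ.prod hK).image_of_continuousOn hg using 1
  ext z
  simp [g, OnePoint.exists]

lemma abs_convexComb_le {t α β M : ℝ} (ht : t ∈ Icc 0 1) (hα : |α| ≤ M) (hβ : |β| ≤ M) :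
    |(1 - t) * α + t * β| ≤ M := by
  obtain ⟨ht0, ht1⟩ := ht
  rw [abs_le] at *
  constructor <;> nlinarith

section Interpolation

variable {a b : ℝ} {m : ℕ}

lemma node_zero : node a b m 0 = a := by simp [node]

lemma node_self (hm : m ≠ 0) : node a b m m = b := by
  have : (m : ℝ) ≠ 0 := Nat.cast_ne_zero.2 hm
  simp only [node]
  field_simp
  ring

lemma node_succ_sub (j : ℕ) : node a b m (j + 1) - node a b m j = (b - a) / m := by
  simp only [node]; push_cast; ring

lemma node_mem_Icc (hab : a ≤ b) {j : ℕ} (hj : j ≤ m) : node a b m j ∈ Icc a b := by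
  have h0 : 0 ≤ (j : ℝ) / m := by positivity
  have h1 : (j : ℝ) / m ≤ 1 := div_le_one_of_le₀ (by exact_mod_cast hj) (by positivity)
  have hnode : node a b m j = a + (j / m) * (b - a) := by simp only [node]; ring
  rw [hnode]
  constructor <;> nlinarith

lemma exists_node_le_le (hm : 0 < m) {x : ℝ} (hax : a ≤ x) (hxb : x ≤ b) :
    ∃ j < m, node a b m j ≤ x ∧ x ≤ node a b m (j + 1) := by
  classical
  have hlast : x ≤ node a b m (m - 1 + 1) := by rwa [Nat.sub_one_add_one hm.ne', node_self hm.ne']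
  have hex : ∃ k, x ≤ node a b m (k + 1) := ⟨m - 1, hlast⟩
  refine ⟨Nat.find hex, (Nat.find_min' hex hlast).trans_lt (Nat.sub_lt hm one_pos), ?_,
    Nat.find_spec hex⟩
  rcases h : Nat.find hex with _ | k
  · rwa [node_zero]
  · exact (not_le.1 (Nat.find_min hex (h ▸ k.lt_succ_self))).le

variable {hab : a ≤ b} {L : C(Icc a b, ℝ) → C(Icc a b, ℝ)}

lemma IsLinInterp.exists_eq_convexComb (hL : IsLinInterp a b hab m L) (hm : 0 < m)
    (x : Icc a b) :
    ∃ t ∈ Icc (0 : ℝ) 1, ∃ p q : Icc a b, dist p x ≤ (b - a) / m ∧ dist q x ≤ (b - a) / m ∧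
      ∀ u, L u x = (1 - t) * u p + t * u q := by
  obtain ⟨j, hjm, hjx, hxj⟩ := exists_node_le_le hm x.2.1 x.2.2
  have hp : (projIcc a b hab (node a b m j) : ℝ) = node a b m j :=
    congrArg Subtype.val (projIcc_of_mem hab (node_mem_Icc hab hjm.le))
  have hq : (projIcc a b hab (node a b m (j + 1)) : ℝ) = node a b m (j + 1) :=
    congrArg Subtype.val (projIcc_of_mem hab (node_mem_Icc hab hjm))
  have hstep := node_succ_sub (a := a) (b := b) (m := m) j
  refine ⟨(x - node a b m j) / (node a b m (j + 1) - node a b m j),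
    ⟨div_nonneg (by linarith) (by linarith), div_le_one_of_le₀ (by linarith) (by linarith)⟩,
    projIcc a b hab (node a b m j), projIcc a b hab (node a b m (j + 1)), ?_, ?_, fun u => ?_⟩
  · rw [Subtype.dist_eq, hp, Real.dist_eq, abs_of_nonpos (by linarith)]
    linarith
  · rw [Subtype.dist_eq, hq, Real.dist_eq, abs_of_nonneg (by linarith)]
    linarith
  · rw [hL u j hjm x hjx hxj]
    ring

lemma IsLinInterp.lipschitzWith (hL : IsLinInterp a b hab m L) (hm : 0 < m) :
    LipschitzWith 1 L := by
  refine LipschitzWith.of_dist_le_mul fun u v => ?_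
  rw [NNReal.coe_one, one_mul, ContinuousMap.dist_le dist_nonneg]
  intro x
  obtain ⟨t, ht, p, q, -, -, hLx⟩ := hL.exists_eq_convexComb hm x
  have hpt : ∀ y, |u y - v y| ≤ dist u v := fun y =>
    (Real.dist_eq _ _).symm.trans_le (ContinuousMap.dist_apply_le_dist y)
  rw [hLx, hLx, Real.dist_eq]
  convert abs_convexComb_le ht (hpt p) (hpt q) using 2
  ring

lemma IsLinInterp.tendsto {L : ℕ → C(Icc a b, ℝ) → C(Icc a b, ℝ)}
    (hL : ∀ m, 0 < m → IsLinInterp a b hab m (L m)) (u : C(Icc a b, ℝ)) :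
    Tendsto (fun m => L m u) atTop (𝓝 u) := by
  refine Metric.tendsto_nhds.2 fun ε hε => ?_
  obtain ⟨δ, hδ, hu⟩ := Metric.uniformContinuous_iff.1
    (CompactSpace.uniformContinuous_of_continuous u.continuous) (ε / 2) (half_pos hε)
  have hfine : ∀ᶠ m : ℕ in atTop, (b - a) / m < δ :=
    (tendsto_const_div_atTop_nhds_zero_nat (b - a)).eventually (gt_mem_nhds hδ)
  filter_upwards [hfine, eventually_gt_atTop 0] with m hmδ hm
  refine lt_of_le_of_lt ((ContinuousMap.dist_le (half_pos hε).le).2 fun x => ?_)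
    (half_lt_self hε)
  obtain ⟨t, ht, p, q, hp, hq, hLx⟩ := (hL m hm).exists_eq_convexComb hm x
  have hclose : ∀ y : Icc a b, dist y x ≤ (b - a) / m → |u y - u x| ≤ ε / 2 := fun y hy =>
    (Real.dist_eq _ _).symm.trans_le (hu (hy.trans_lt hmδ)).le
  rw [hLx, Real.dist_eq]
  convert abs_convexComb_le ht (hclose p hp) (hclose q hq) using 2
  ring

end Interpolation

/-- With `U_m = L_m(V)`, `W_m = V ∪ U_m` and `W = ⋃_{i=1}^∞ W_i`, the set `W` is a
compact subset of `C([a,b])`. -/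
theorem W_isCompact (a b : ℝ) (hab : a < b)
    (V : Set C(Set.Icc a b, ℝ)) (hV : IsCompact V)
    (L : ℕ → C(Set.Icc a b, ℝ) → C(Set.Icc a b, ℝ))
    (hL : ∀ i : ℕ, 0 < i → IsLinInterp a b hab.le i (L i))
    (W : Set C(Set.Icc a b, ℝ))
    (hW : W = ⋃ i ∈ {i : ℕ | 1 ≤ i}, (V ∪ (L i) '' V)) :
    IsCompact W := by
  have hW' : W = V ∪ ⋃ n : ℕ, L (n + 1) '' V := by
    rw [hW]
    ext u
    simp only [mem_ofPred_eq, mem_iUnion, mem_union, mem_image, exists_prop]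
    constructor
    · rintro ⟨i, hi, hu | ⟨v, hv, rfl⟩⟩
      · exact Or.inl hu
      · obtain ⟨n, rfl⟩ := Nat.exists_eq_add_of_le' hi
        exact Or.inr ⟨n, v, hv, rfl⟩
    · rintro (hu | ⟨n, hn⟩)
      · exact ⟨1, le_rfl, Or.inl hu⟩
      · exact ⟨n + 1, n.succ_pos, Or.inr hn⟩
  have hLip : ∀ n : ℕ, LipschitzWith 1 (L (n + 1)) := fun n =>
    (hL _ n.succ_pos).lipschitzWith n.succ_pos
  rw [hW']
  refine hV.union_iUnion_image_of_tendsto (fun n => (hLip n).continuous) fun u _ => ?_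
  exact ((tendsto_add_atTop_iff_nat 1).2 (IsLinInterp.tendsto hL u)).uncurry_of_lipschitzWith hLip
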